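/- arXiv:1203.2778 — 12 statements merged into one kernel-verified Lean document; each statement's English description precedes it below -/
import Mathlib

section
/- For every real t and every x > 0 with x ≠ 1, the function f_{L_t}(x) = (x−1)²(x+1)^t / (2^t x^{(t+1)/2}) is strictly increasing in t; consequently for s < t, L_s(a,b) < L_t(a,b) for all a,b > 0 with a ≠ b, where L_t(a,b) = (a−b)²(a+b)^t / (2^t (√(ab))^{t+1}). -/
/-!
With `r = (a + b) / (2 √(ab))`, the quantity `L_t(a, b)` factors as
`(a - b)² / √(ab) * r ^ t`, and `r > 1` for `a ≠ b` by strict AM-GM, so it is strictly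
increasing in `t`. The function `f_{L_t}(x)` is the case `(a, b) = (x, 1)`, since
`x ^ ((t + 1) / 2) = √x ^ (t + 1)`.
-/

open Real

lemma two_mul_sqrt_mul_lt_add {a b : ℝ} (ha : 0 ≤ a) (hb : 0 ≤ b) (hab : a ≠ b) :
    2 * √(a * b) < a + b := by
  have hsqrt_ne : √a ≠ √b := fun h => hab (by rw [← sq_sqrt ha, ← sq_sqrt hb, h])
  have hsq : 0 < (√a - √b) ^ 2 := sq_pos_of_ne_zero (sub_ne_zero.mpr hsqrt_ne)
  rw [sqrt_mul ha]
  nlinarith [sq_sqrt ha, sq_sqrt hb]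

lemma mul_rpow_div_rpow_mul_rpow_add_one {A P Q S : ℝ} (hP : 0 ≤ P) (hQ : 0 < Q) (hS : 0 < S)
    (t : ℝ) : A * P ^ t / (Q ^ t * S ^ (t + 1)) = A / S * (P / (Q * S)) ^ t := by
  rw [div_rpow hP (mul_nonneg hQ.le hS.le), mul_rpow hQ.le hS.le, rpow_add hS, rpow_one]
  have hQt : Q ^ t ≠ 0 := (rpow_pos_of_pos hQ t).ne'
  have hSt : S ^ t ≠ 0 := (rpow_pos_of_pos hS t).ne'
  field_simp

lemma strictMono_mul_rpow_div_rpow_mul_rpow_add_one {A P Q S : ℝ} (hA : 0 < A) (hQ : 0 < Q)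
    (hS : 0 < S) (hQSP : Q * S < P) :
    StrictMono fun t : ℝ => A * P ^ t / (Q ^ t * S ^ (t + 1)) := by
  have hQS : 0 < Q * S := mul_pos hQ hS
  have hratio : 1 < P / (Q * S) := (one_lt_div hQS).mpr hQSP
  intro s t hst
  simp only [mul_rpow_div_rpow_mul_rpow_add_one (hQS.trans hQSP).le hQ hS]
  exact mul_lt_mul_of_pos_left (rpow_lt_rpow_of_exponent_lt hratio hst) (div_pos hA hS)

lemma strictMono_generalizedTriangularDiscrimination {a b : ℝ} (ha : 0 < a) (hb : 0 < b)
    (hab : a ≠ b) :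
    StrictMono fun t : ℝ => (a - b) ^ 2 * (a + b) ^ t / (2 ^ t * √(a * b) ^ (t + 1)) :=
  strictMono_mul_rpow_div_rpow_mul_rpow_add_one (sq_pos_of_ne_zero (sub_ne_zero.mpr hab)) two_pos
    (sqrt_pos.mpr (mul_pos ha hb)) (two_mul_sqrt_mul_lt_add ha.le hb.le hab)

theorem L_t_strict_mono :
    (∀ x : ℝ, 0 < x → x ≠ 1 →
      StrictMono (fun t : ℝ => (x-1)^2 * (x+1)^t / (2^t * x^((t+1)/2)))) ∧
    (∀ s t : ℝ, s < t → ∀ a b : ℝ, 0 < a → 0 < b → a ≠ b →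
      (a-b)^2 * (a+b)^s / (2^s * (Real.sqrt (a*b))^(s+1)) <
      (a-b)^2 * (a+b)^t / (2^t * (Real.sqrt (a*b))^(t+1))) := by
  refine ⟨fun x hx hx1 => ?_, fun s t hst a b ha hb hab =>
    strictMono_generalizedTriangularDiscrimination ha hb hab hst⟩
  simpa only [mul_one, rpow_div_two_eq_sqrt _ hx.le] using
    strictMono_generalizedTriangularDiscrimination hx one_pos hx1
end

section
/- For all positive reals a, b: (1/4)·Δ(a,b) ≤ h(a,b) ≤ (1/8)·K(a,b) ≤ (1/16)·Ψ(a,b) ≤ (1/16)·F(a,b) ≤ (1/64)·L(a,b), where Δ(a,b)=(a−b)²/(a+b), h(a,b)=(1/2)(√a−√b)², K(a,b)=(a−b)²/√(ab), Ψ(a,b)=(a−b)²(a+b)/(ab), F(a,b)=(a²−b²)²/(2(ab)^{3/2}), L(a,b)=(a−b)²(a+b)³/((ab)²). -/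
theorem divergence_chain (a b : ℝ) (ha : 0 < a) (hb : 0 < b) :
    (1/4)*((a-b)^2/(a+b)) ≤ (1/2)*(Real.sqrt a - Real.sqrt b)^2 ∧
    (1/2)*(Real.sqrt a - Real.sqrt b)^2 ≤ (1/8)*((a-b)^2/Real.sqrt (a*b)) ∧
    (1/8)*((a-b)^2/Real.sqrt (a*b)) ≤ (1/16)*((a-b)^2*(a+b)/(a*b)) ∧
    (1/16)*((a-b)^2*(a+b)/(a*b)) ≤ (1/16)*((a^2-b^2)^2/(2*(a*b)^((3:ℝ)/2))) ∧
    (1/16)*((a^2-b^2)^2/(2*(a*b)^((3:ℝ)/2))) ≤ (1/64)*((a-b)^2*(a+b)^3/(a*b)^2) := by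
  set s := Real.sqrt a with hsdef
  set t := Real.sqrt b with htdef
  have hs : 0 < s := Real.sqrt_pos.mpr ha
  have ht : 0 < t := Real.sqrt_pos.mpr hb
  have ha' : a = s^2 := (Real.sq_sqrt ha.le).symm
  have hb' : b = t^2 := (Real.sq_sqrt hb.le).symm
  have hst : (0:ℝ) < s * t := mul_pos hs ht
  have hsab : Real.sqrt (a*b) = s * t := by
    rw [ha', hb']; rw [show s^2*t^2 = (s*t)^2 by ring, Real.sqrt_sq hst.le]
  have hrpow : (a*b)^((3:ℝ)/2) = (s*t)^3 := by
    rw [ha', hb', show s^2*t^2 = (s*t)^2 by ring]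
    rw [show ((s*t)^2 : ℝ) = (s*t)^(2:ℝ) by
      rw [← Real.rpow_natCast (s*t) 2]; norm_num]
    rw [← Real.rpow_natCast (s*t) 3, ← Real.rpow_mul hst.le]
    norm_num
  rw [hsab, hrpow, ha', hb']
  have hpos2 : (0:ℝ) < s^2 + t^2 := by positivity
  refine ⟨?_, ?_, ?_, ?_, ?_⟩
  · rw [← sub_nonneg]
    have h : 1 / 2 * (s - t) ^ 2 - 1 / 4 * ((s ^ 2 - t ^ 2) ^ 2 / (s ^ 2 + t ^ 2))
        = (s-t)^2 * (s-t)^2 / (4 * (s^2+t^2)) := by field_simp; ring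
    rw [h]; positivity
  · rw [← sub_nonneg]
    have h : 1 / 8 * ((s ^ 2 - t ^ 2) ^ 2 / (s * t)) - 1 / 2 * (s - t) ^ 2
        = (s-t)^2 * (s-t)^2 / (8 * (s*t)) := by field_simp; ring
    rw [h]; positivity
  · rw [← sub_nonneg]
    have h : 1 / 16 * ((s ^ 2 - t ^ 2) ^ 2 * (s ^ 2 + t ^ 2) / (s ^ 2 * t ^ 2))
        - 1 / 8 * ((s ^ 2 - t ^ 2) ^ 2 / (s * t))
        = (s^2-t^2)^2 * (s-t)^2 / (16 * (s*t)^2) := by field_simp; ring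
    rw [h]; positivity
  · rw [← sub_nonneg]
    have h : 1 / 16 * (((s ^ 2) ^ 2 - (t ^ 2) ^ 2) ^ 2 / (2 * (s * t) ^ 3))
        - 1 / 16 * ((s ^ 2 - t ^ 2) ^ 2 * (s ^ 2 + t ^ 2) / (s ^ 2 * t ^ 2))
        = (s^2-t^2)^2 * (s^2+t^2) * (s-t)^2 / (32 * (s*t)^3) := by field_simp; ring
    rw [h]; positivity
  · rw [← sub_nonneg]
    have h : 1 / 64 * ((s ^ 2 - t ^ 2) ^ 2 * (s ^ 2 + t ^ 2) ^ 3 / (s ^ 2 * t ^ 2) ^ 2)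
        - 1 / 16 * (((s ^ 2) ^ 2 - (t ^ 2) ^ 2) ^ 2 / (2 * (s * t) ^ 3))
        = (s^2-t^2)^2 * (s^2+t^2)^2 * (s-t)^2 / (64 * (s*t)^4) := by field_simp; ring
    rw [h]; positivity
end

section
/- For all positive reals a, b: 12·(C(a,b) − N(a,b)) − 7·Δ(a,b) = (√a − √b)⁴/(a+b) ≥ 0, where C(a,b)=(a²+b²)/(a+b), N(a,b)=(a+√(ab)+b)/3, Δ(a,b)=(a−b)²/(a+b). -/
/-! Writing `a = s²`, `b = t²` with `s, t ≥ 0` turns `√(ab)` into `st`, and the identity becomes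
a rational identity in `s, t` whose right-hand side `(s - t)⁴ / (s² + t²)` is visibly nonnegative. -/

theorem twelve_mul_sub_seven_mul_eq_sub_pow_four_div {K : Type*} [Field K] [LinearOrder K]
    [IsStrictOrderedRing K] (s t : K) :
    12*(((s^2)^2+(t^2)^2)/(s^2+t^2) - (s^2 + s*t + t^2)/3) - 7*((s^2-t^2)^2/(s^2+t^2)) =
      (s - t)^4/(s^2+t^2) := by
  rcases eq_or_ne (s^2 + t^2) 0 with hst | hst
  · obtain ⟨rfl, rfl⟩ : s = 0 ∧ t = 0 := by
      constructor <;> nlinarith [sq_nonneg s, sq_nonneg t]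
    norm_num
  · field_simp
    ring

theorem M0_identity (a b : ℝ) (ha : 0 < a) (hb : 0 < b) :
    12*((a^2+b^2)/(a+b) - (a + Real.sqrt (a*b) + b)/3) - 7*((a-b)^2/(a+b)) =
      (Real.sqrt a - Real.sqrt b)^4/(a+b) ∧
    0 ≤ (Real.sqrt a - Real.sqrt b)^4/(a+b) := by
  obtain ⟨s, hs, rfl⟩ : ∃ s, 0 ≤ s ∧ s^2 = a := ⟨√a, Real.sqrt_nonneg a, Real.sq_sqrt ha.le⟩
  obtain ⟨t, ht, rfl⟩ : ∃ t, 0 ≤ t ∧ t^2 = b := ⟨√b, Real.sqrt_nonneg b, Real.sq_sqrt hb.le⟩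
  rw [Real.sqrt_mul (sq_nonneg s), Real.sqrt_sq hs, Real.sqrt_sq ht]
  exact ⟨twelve_mul_sub_seven_mul_eq_sub_pow_four_div s t, by positivity⟩
end

section
/- For all positive reals a, b: K(a,b) + 26·Δ(a,b) − 48·(C(a,b) − N(a,b)) = (√a − √b)⁶/((a+b)√(ab)) ≥ 0. -/
lemma V1_aux (s t : ℝ) (hs : 0 < s) (ht : 0 < t) :
    (s^2-t^2)^2/(s*t) + 26*((s^2-t^2)^2/(s^2+t^2))
      - 48*((s^4+t^4)/(s^2+t^2) - (s^2 + s*t + t^2)/3) =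
      (s - t)^6/((s^2+t^2)*(s*t)) := by
  have h1 : s * t > 0 := mul_pos hs ht
  have h2 : s ^ 2 + t ^ 2 > 0 := by positivity
  field_simp
  ring

theorem V1_identity (a b : ℝ) (ha : 0 < a) (hb : 0 < b) :
    (a-b)^2/Real.sqrt (a*b) + 26*((a-b)^2/(a+b))
      - 48*((a^2+b^2)/(a+b) - (a + Real.sqrt (a*b) + b)/3) =
      (Real.sqrt a - Real.sqrt b)^6/((a+b)*Real.sqrt (a*b)) ∧
    0 ≤ (Real.sqrt a - Real.sqrt b)^6/((a+b)*Real.sqrt (a*b)) := by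
  have hs : 0 < Real.sqrt a := Real.sqrt_pos.mpr ha
  have ht : 0 < Real.sqrt b := Real.sqrt_pos.mpr hb
  have hsa : Real.sqrt a ^ 2 = a := Real.sq_sqrt ha.le
  have hsb : Real.sqrt b ^ 2 = b := Real.sq_sqrt hb.le
  have hab : Real.sqrt (a * b) = Real.sqrt a * Real.sqrt b := Real.sqrt_mul ha.le b
  constructor
  · have := V1_aux (Real.sqrt a) (Real.sqrt b) hs ht
    have e1 : Real.sqrt a ^ 4 = a ^ 2 := by rw [show (4:ℕ) = 2*2 from rfl, pow_mul, hsa]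
    have e2 : Real.sqrt b ^ 4 = b ^ 2 := by rw [show (4:ℕ) = 2*2 from rfl, pow_mul, hsb]
    rw [hsa, hsb, e1, e2] at this
    rw [hab]
    exact this
  · apply div_nonneg <;> positivity
end

section
/- For all positive reals a, b: Ψ(a,b) + 32·h(a,b) − 6·K(a,b) = (√a−√b)⁶/(ab) ≥ 0, i.e. the identity h₂(a,b) = Ψ + 32h − 6K holds where h₂(a,b)=(√a−√b)⁶/(ab). -/
theorem h2_identity (a b : ℝ) (ha : 0 < a) (hb : 0 < b) :
    (a-b)^2*(a+b)/(a*b) + 32*((1/2)*(Real.sqrt a - Real.sqrt b)^2)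
      - 6*((a-b)^2/Real.sqrt (a*b)) = (Real.sqrt a - Real.sqrt b)^6/(a*b) ∧
    0 ≤ (Real.sqrt a - Real.sqrt b)^6/(a*b) := by
  set x := Real.sqrt a with hxdef
  set y := Real.sqrt b with hydef
  have hx : x ^ 2 = a := Real.sq_sqrt ha.le
  have hy : y ^ 2 = b := Real.sq_sqrt hb.le
  have hx0 : 0 < x := Real.sqrt_pos.mpr ha
  have hy0 : 0 < y := Real.sqrt_pos.mpr hb
  have hab : Real.sqrt (a*b) = x*y := by
    rw [Real.sqrt_mul ha.le]
  constructor
  · rw [hab, ← hx, ← hy]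
    field_simp
    ring
  · positivity
end

section
/- For all positive reals a, b: F(a,b) + 2·K(a,b) − 2·Ψ(a,b) = (1/2)·(a−b)²(√a−√b)⁴/((ab)^{3/2}) ≥ 0. -/
theorem V8_identity (a b : ℝ) (ha : 0 < a) (hb : 0 < b) :
    (a^2-b^2)^2/(2*(a*b)^((3:ℝ)/2)) + 2*((a-b)^2/Real.sqrt (a*b))
      - 2*((a-b)^2*(a+b)/(a*b)) =
      (1/2)*((a-b)^2*(Real.sqrt a - Real.sqrt b)^4/(a*b)^((3:ℝ)/2)) ∧
    0 ≤ (1/2)*((a-b)^2*(Real.sqrt a - Real.sqrt b)^4/(a*b)^((3:ℝ)/2)) := by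
  set s := Real.sqrt a with hs
  set t := Real.sqrt b with ht
  have hs0 : 0 < s := Real.sqrt_pos.mpr ha
  have ht0 : 0 < t := Real.sqrt_pos.mpr hb
  have hsa : s ^ 2 = a := Real.sq_sqrt ha.le
  have htb : t ^ 2 = b := Real.sq_sqrt hb.le
  have hab : Real.sqrt (a * b) = s * t := by
    rw [Real.sqrt_mul ha.le]
  have h32 : (a * b) ^ ((3:ℝ)/2) = (s * t) ^ 3 := by
    rw [show (3:ℝ)/2 = (1/2) * (3:ℕ) by norm_num,
      Real.rpow_mul (by positivity), Real.rpow_natCast,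
      show (a*b) ^ ((1:ℝ)/2) = Real.sqrt (a*b) by
        rw [Real.rpow_div_two_eq_sqrt _ (by positivity), Real.rpow_one],
      hab]
  rw [h32, hab]
  rw [← hsa, ← htb]
  constructor
  · field_simp
    ring
  · positivity
end

section
/- For all positive reals a, b: L(a,b) + 12·Ψ(a,b) − 8·K(a,b) − 12·F(a,b) = (a−b)²(√a−√b)⁶/((ab)²) ≥ 0. -/
theorem V12_identity (a b : ℝ) (ha : 0 < a) (hb : 0 < b) :
    (a-b)^2*(a+b)^3/(a*b)^2 + 12*((a-b)^2*(a+b)/(a*b))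
      - 8*((a-b)^2/Real.sqrt (a*b)) - 12*((a^2-b^2)^2/(2*(a*b)^((3:ℝ)/2))) =
      (a-b)^2*(Real.sqrt a - Real.sqrt b)^6/(a*b)^2 ∧
    0 ≤ (a-b)^2*(Real.sqrt a - Real.sqrt b)^6/(a*b)^2 := by
  set x := Real.sqrt a with hxdef
  set y := Real.sqrt b with hydef
  have hx : 0 < x := Real.sqrt_pos.2 ha
  have hy : 0 < y := Real.sqrt_pos.2 hb
  have hax : a = x^2 := (Real.sq_sqrt ha.le).symm
  have hby : b = y^2 := (Real.sq_sqrt hb.le).symm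
  have hsab : Real.sqrt (a*b) = x*y := by
    rw [Real.sqrt_mul ha.le]
  have hrpow : (a*b)^((3:ℝ)/2) = (x*y)^3 := by
    have h1 : (a*b)^((3:ℝ)/2) = ((a*b)^((1:ℝ)/2))^(3:ℕ) := by
      rw [← Real.rpow_natCast ((a*b)^((1:ℝ)/2)) 3, ← Real.rpow_mul (by positivity)]
      norm_num
    rw [h1, ← Real.sqrt_eq_rpow, hsab]
  constructor
  · rw [hsab, hrpow, hax, hby]
    have h2 : (0:ℝ) < x*y := by positivity
    field_simp
    ring
  · positivity
end

section
/- For all positive reals a, b: L(a,b) + 4·Ψ(a,b) − 8·F(a,b) = (a+b)(√a+√b)²(√a−√b)⁶/((ab)²)·(1/1) ≥ 0, i.e. the identity L + 4Ψ − 8F = (a+b)(√a+√b)²(√a−√b)⁶/((ab)²) holds (up to the stated normalization it is nonnegative). -/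
theorem V14_identity (a b : ℝ) (ha : 0 < a) (hb : 0 < b) :
    (a-b)^2*(a+b)^3/(a*b)^2 + 4*((a-b)^2*(a+b)/(a*b))
      - 8*((a^2-b^2)^2/(2*(a*b)^((3:ℝ)/2))) =
      (a+b)*(Real.sqrt a + Real.sqrt b)^2*(Real.sqrt a - Real.sqrt b)^6/(a*b)^2 ∧
    0 ≤ (a+b)*(Real.sqrt a + Real.sqrt b)^2*(Real.sqrt a - Real.sqrt b)^6/(a*b)^2 := by
  set x := Real.sqrt a with hx
  set y := Real.sqrt b with hy
  have hxp : 0 < x := Real.sqrt_pos.mpr ha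
  have hyp : 0 < y := Real.sqrt_pos.mpr hb
  have hxa : x^2 = a := Real.sq_sqrt ha.le
  have hyb : y^2 = b := Real.sq_sqrt hb.le
  have hab : (a*b)^((3:ℝ)/2) = (x*y)^3 := by
    rw [hx, hy, ← Real.sqrt_mul ha.le, Real.sqrt_eq_rpow,
      ← Real.rpow_natCast _ 3, ← Real.rpow_mul (by positivity)]
    norm_num
  constructor
  · rw [hab, ← hxa, ← hyb]
    field_simp
    ring
  · have h6 : (0:ℝ) ≤ (x - y)^6 := by positivity
    positivity
end

section
/- For all positive reals a and b with a ≠ b, and all integers t ≥ 0, the function x ↦ (x−1)²(√x−1)^{2t}/((x+1)(√x)^t) on (0,∞) has positive second derivative for x ≠ 1; consequently the measure Δ¹_t(a,b) = (a−b)²(√a−√b)^{2t}/((a+b)(√(ab))^t) is jointly convex on (0,∞)². -/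
open Real

noncomputable def gA (x : ℝ) : ℝ := (x-1)^2/(x+1)
noncomputable def gA' (x : ℝ) : ℝ := (x-1)*(x+3)/(x+1)^2
noncomputable def gB (x : ℝ) : ℝ := (Real.sqrt x - 1)^2 / Real.sqrt x
noncomputable def gB' (x : ℝ) : ℝ := (x-1)/(2*x*Real.sqrt x)
noncomputable def gB'' (x : ℝ) : ℝ := (3-x)/(4*x^2*Real.sqrt x)

lemma hasDerivAt_gA {x : ℝ} (hx : 0 < x) : HasDerivAt gA (gA' x) x := by
  have h1 : x + 1 ≠ 0 := by linarith
  have := (((hasDerivAt_id x).sub_const 1).pow 2).div ((hasDerivAt_id x).add_const 1) h1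
  refine this.congr_deriv ?_
  simp only [Pi.pow_apply, Pi.mul_apply, id_eq]
  unfold gA'
  field_simp
  ring

lemma hasDerivAt_gA' {x : ℝ} (hx : 0 < x) : HasDerivAt gA' (8/(x+1)^3) x := by
  have h1 : x + 1 ≠ 0 := by linarith
  have h2 : (x+1)^2 ≠ 0 := pow_ne_zero _ h1
  have := ((((hasDerivAt_id x).sub_const 1).mul ((hasDerivAt_id x).add_const 3)).div
    (((hasDerivAt_id x).add_const 1).pow 2) h2)
  refine this.congr_deriv ?_
  simp only [Pi.pow_apply, Pi.mul_apply, id_eq]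
  field_simp
  ring

lemma hasDerivAt_gB {x : ℝ} (hx : 0 < x) : HasDerivAt gB (gB' x) x := by
  have hs : Real.sqrt x ≠ 0 := ne_of_gt (Real.sqrt_pos.2 hx)
  have hsq : Real.sqrt x ^ 2 = x := Real.sq_sqrt hx.le
  have hd := Real.hasDerivAt_sqrt (ne_of_gt hx)
  have := (((hd.sub_const 1).pow 2).div hd hs)
  refine this.congr_deriv ?_
  simp only [Pi.pow_apply, Pi.mul_apply, id_eq]
  unfold gB'
  set s := Real.sqrt x with hsdef
  rw [← hsq]
  have hs2 : s ≠ 0 := hs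
  field_simp
  ring

lemma hasDerivAt_gB' {x : ℝ} (hx : 0 < x) : HasDerivAt gB' (gB'' x) x := by
  have hs0 : 0 < Real.sqrt x := Real.sqrt_pos.2 hx
  have hs : Real.sqrt x ≠ 0 := ne_of_gt hs0
  have hsq : Real.sqrt x ^ 2 = x := Real.sq_sqrt hx.le
  have hd := Real.hasDerivAt_sqrt (ne_of_gt hx)
  have hden : 2*x*Real.sqrt x ≠ 0 := by positivity
  have := ((hasDerivAt_id x).sub_const 1).div
    (((hasDerivAt_const x 2).mul (hasDerivAt_id x)).mul hd) hden
  refine this.congr_deriv ?_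
  simp only [Pi.pow_apply, Pi.mul_apply, id_eq]
  unfold gB''
  set s := Real.sqrt x with hsdef
  rw [← hsq]
  field_simp
  ring

noncomputable def gF (t : ℕ) (x : ℝ) : ℝ :=
  (x-1)^2*(Real.sqrt x - 1)^(2*t)/((x+1)*(Real.sqrt x)^t)

lemma gF_eq {t : ℕ} {x : ℝ} (hx : 0 < x) : gF t x = gA x * gB x ^ t := by
  have hs0 : 0 < Real.sqrt x := Real.sqrt_pos.2 hx
  have h1 : x + 1 ≠ 0 := by linarith
  unfold gF gA gB
  rw [div_pow, pow_mul]
  field_simp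

noncomputable def g1 (t : ℕ) (x : ℝ) : ℝ :=
  gA' x * gB x ^ t + gA x * ((t:ℝ) * gB x ^ (t-1) * gB' x)

noncomputable def g2 (t : ℕ) (x : ℝ) : ℝ :=
  8/(x+1)^3 * gB x ^ t + 2*(t:ℝ) * gA' x * gB x ^ (t-1) * gB' x
  + (t:ℝ)*((t-1 : ℕ):ℝ) * gA x * gB x ^ (t-1-1) * (gB' x)^2
  + (t:ℝ) * gA x * gB x ^ (t-1) * gB'' x

lemma hasDerivAt_gApow {t : ℕ} {x : ℝ} (hx : 0 < x) :
    HasDerivAt (fun x => gA x * gB x ^ t) (g1 t x) x :=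
  (hasDerivAt_gA hx).mul ((hasDerivAt_gB hx).pow t)

lemma hasDerivAt_g1 {t : ℕ} {x : ℝ} (hx : 0 < x) :
    HasDerivAt (g1 t) (g2 t x) x := by
  have hB := hasDerivAt_gB hx
  have h1 : HasDerivAt (fun x => gA' x * gB x ^ t)
      (8/(x+1)^3 * gB x ^ t + gA' x * ((t:ℝ) * gB x ^ (t-1) * gB' x)) x :=
    (hasDerivAt_gA' hx).mul (hB.pow t)
  have h2 : HasDerivAt (fun x => (t:ℝ) * gB x ^ (t-1) * gB' x)
      ((0 * gB x ^ (t-1) + (t:ℝ) * (((t-1 : ℕ):ℝ) * gB x ^ (t-1-1) * gB' x)) * gB' x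
        + (t:ℝ) * gB x ^ (t-1) * gB'' x) x :=
    (((hasDerivAt_const x ((t:ℝ))).mul (hB.pow (t-1))).mul (hasDerivAt_gB' hx))
  have h3 := h1.add ((hasDerivAt_gA hx).mul h2)
  refine h3.congr_deriv ?_
  unfold g2
  ring

lemma gF_eventuallyEq {t : ℕ} {x : ℝ} (hx : 0 < x) :
    gF t =ᶠ[nhds x] (fun x => gA x * gB x ^ t) := by
  filter_upwards [isOpen_Ioi.mem_nhds (Set.mem_Ioi.2 hx)] with y hy
  exact gF_eq hy

lemma deriv_gF {t : ℕ} {x : ℝ} (hx : 0 < x) : deriv (gF t) x = g1 t x := by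
  rw [(gF_eventuallyEq hx).deriv_eq]
  exact (hasDerivAt_gApow hx).deriv

lemma deriv_gF_eventuallyEq {t : ℕ} {x : ℝ} (hx : 0 < x) :
    deriv (gF t) =ᶠ[nhds x] g1 t := by
  filter_upwards [isOpen_Ioi.mem_nhds (Set.mem_Ioi.2 hx)] with y hy
  exact deriv_gF hy

lemma deriv2_gF {t : ℕ} {x : ℝ} (hx : 0 < x) : deriv (deriv (gF t)) x = g2 t x := by
  rw [(deriv_gF_eventuallyEq hx).deriv_eq]
  exact (hasDerivAt_g1 hx).deriv

set_option maxHeartbeats 2000000 in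
lemma g2_pos {t : ℕ} {x : ℝ} (hx : 0 < x) (hx1 : x ≠ 1) : 0 < g2 t x := by
  have hs0 : 0 < Real.sqrt x := Real.sqrt_pos.2 hx
  have hsq : Real.sqrt x ^ 2 = x := Real.sq_sqrt hx.le
  have hs1 : Real.sqrt x ≠ 1 := by
    intro h; apply hx1; rw [← hsq, h]; norm_num
  have hx1' : x + 1 ≠ 0 := by linarith
  match t with
  | 0 =>
    unfold g2
    norm_num
    positivity
  | 1 =>
    unfold g2 gA gA' gB gB' gB''
    set s := Real.sqrt x with hsdef
    rw [← hsq]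
    norm_num
    have key : 8 / (s^2 + 1) ^ 3 * ((s - 1) ^ 2 / s) + 2 * ((s^2 - 1) * (s^2 + 3) / (s^2 + 1) ^ 2) * ((s^2 - 1) / (2 * s^2 * s)) +
        (s^2 - 1) ^ 2 / (s^2 + 1) * ((3 - s^2) / (4 * (s^2) ^ 2 * s)) =
        ((s-1)^2*(32*s^4+(s+1)^2*(s^2+1)*(3*s^4+14*s^2+3)))/(4*s^5*(s^2+1)^3) := by
      have hs : s ≠ 0 := ne_of_gt hs0
      field_simp
      ring
    rw [key]
    have h1 : 0 < (s-1)^2 := pow_two_pos_of_ne_zero (sub_ne_zero.2 hs1)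
    have h2 : 0 < 32*s^4+(s+1)^2*(s^2+1)*(3*s^4+14*s^2+3) := by positivity
    have h3 : 0 < 4*s^5*(s^2+1)^3 := by positivity
    exact div_pos (mul_pos h1 h2) h3
  | (n+2) =>
    unfold g2 gA gA' gB gB' gB''
    set s := Real.sqrt x with hsdef
    have hs : s ≠ 0 := ne_of_gt hs0
    have e1 : n + 2 - 1 = n + 1 := by omega
    have e2 : n + 2 - 1 - 1 = n := by omega
    rw [e2, e1, ← hsq]
    push_cast
    have hBpos : 0 < (s-1)^2/s :=
      div_pos (pow_two_pos_of_ne_zero (sub_ne_zero.2 hs1)) hs0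
    have key : 8 / (s ^ 2 + 1) ^ 3 * ((s - 1) ^ 2 / s) ^ (n + 2) +
        2 * ((n:ℝ) + 2) * ((s ^ 2 - 1) * (s ^ 2 + 3) / (s ^ 2 + 1) ^ 2) * ((s - 1) ^ 2 / s) ^ (n + 1) *
          ((s ^ 2 - 1) / (2 * s ^ 2 * s)) +
        ((n:ℝ) + 2) * ((n:ℝ) + 1) * ((s ^ 2 - 1) ^ 2 / (s ^ 2 + 1)) * ((s - 1) ^ 2 / s) ^ n *
          ((s ^ 2 - 1) / (2 * s ^ 2 * s)) ^ 2 +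
        ((n:ℝ) + 2) * ((s ^ 2 - 1) ^ 2 / (s ^ 2 + 1)) * ((s - 1) ^ 2 / s) ^ (n + 1) *
          ((3 - s ^ 2) / (4 * (s ^ 2) ^ 2 * s)) =
        ((s-1)^2/s)^n * ((s-1)^4 *
          (32*s^4 + 4*((n:ℝ)+2)*s^2*(s+1)^2*(s^2+3)*(s^2+1)
            + ((n:ℝ)+2)*((n:ℝ)+1)*(s+1)^4*(s^2+1)^2
            + ((n:ℝ)+2)*(s+1)^2*(s^2+1)^2*(3-s^2)) / (4*s^6*(s^2+1)^3)) := by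
      rw [pow_add, pow_add]
      field_simp
      ring
    rw [key]
    have hn : (0:ℝ) ≤ n := Nat.cast_nonneg n
    have hP : 0 < 32*s^4 + 4*((n:ℝ)+2)*s^2*(s+1)^2*(s^2+3)*(s^2+1)
            + ((n:ℝ)+2)*((n:ℝ)+1)*(s+1)^4*(s^2+1)^2
            + ((n:ℝ)+2)*(s+1)^2*(s^2+1)^2*(3-s^2) := by
      have h4 : (0:ℝ) < ((n:ℝ)+1)*(s+1)^2 + 3 - s^2 := by
        nlinarith [mul_nonneg hn (sq_nonneg (s+1))]
      have h5 : (0:ℝ) ≤ (((n:ℝ)+2)*(s+1)^2*(s^2+1)^2) * (((n:ℝ)+1)*(s+1)^2 + 3 - s^2) :=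
        mul_nonneg (by positivity) h4.le
      have h6 : (0:ℝ) ≤ 4*((n:ℝ)+2)*s^2*(s+1)^2*(s^2+3)*(s^2+1) := by positivity
      nlinarith [pow_pos hs0 4]
    have h14 : 0 < (s-1)^4 := by
      have := pow_two_pos_of_ne_zero (sub_ne_zero.2 hs1)
      calc (0:ℝ) < ((s-1)^2)^2 := pow_two_pos_of_ne_zero (ne_of_gt this)
        _ = (s-1)^4 := by ring
    exact mul_pos (pow_pos hBpos n) (div_pos (mul_pos h14 hP) (by positivity))

lemma g2_nonneg {t : ℕ} {x : ℝ} (hx : 0 < x) : 0 ≤ g2 t x := by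
  rcases eq_or_ne x 1 with rfl | hx1
  · unfold g2 gA gA' gB gB' gB''
    norm_num [Real.sqrt_one]
  · exact (g2_pos hx hx1).le

lemma gF_diffAt {t : ℕ} {x : ℝ} (hx : 0 < x) : DifferentiableAt ℝ (gF t) x :=
  ((gF_eventuallyEq hx).differentiableAt_iff).2 (hasDerivAt_gApow hx).differentiableAt

lemma gF_convex (t : ℕ) : ConvexOn ℝ (Set.Ioi 0) (gF t) := by
  apply convexOn_of_deriv2_nonneg (convex_Ioi 0)
  · intro x hx
    exact (gF_diffAt hx).continuousAt.continuousWithinAt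
  · rw [interior_Ioi]
    exact fun x hx => (gF_diffAt hx).differentiableWithinAt
  · rw [interior_Ioi]
    intro x hx
    exact (((deriv_gF_eventuallyEq hx).differentiableAt_iff).2
      (hasDerivAt_g1 hx).differentiableAt).differentiableWithinAt
  · rw [interior_Ioi]
    intro x hx
    have : deriv^[2] (gF t) x = deriv (deriv (gF t)) x := rfl
    rw [this, deriv2_gF hx]
    exact g2_nonneg hx

lemma perspective_convex {f : ℝ → ℝ} (hf : ConvexOn ℝ (Set.Ioi 0) f) :
    ConvexOn ℝ (Set.Ioi (0:ℝ) ×ˢ Set.Ioi 0) (fun p : ℝ × ℝ => p.2 * f (p.1 / p.2)) := by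
  refine ⟨(convex_Ioi 0).prod (convex_Ioi 0), ?_⟩
  rintro ⟨a1, b1⟩ ⟨ha1, hb1⟩ ⟨a2, b2⟩ ⟨ha2, hb2⟩ u v hu hv huv
  simp only [Set.mem_Ioi] at ha1 hb1 ha2 hb2
  simp only [Prod.smul_mk, Prod.mk_add_mk, smul_eq_mul]
  have hb : 0 < u * b1 + v * b2 := by
    rcases hu.lt_or_eq with hu' | hu'
    · have : 0 ≤ v * b2 := mul_nonneg hv hb2.le
      nlinarith
    · have hv' : v = 1 := by linarith
      rw [← hu', hv']; simpa using hb2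
  have hb1' : b1 ≠ 0 := ne_of_gt hb1
  have hb2' : b2 ≠ 0 := ne_of_gt hb2
  have hb' : u * b1 + v * b2 ≠ 0 := ne_of_gt hb
  have hw1 : 0 ≤ u * b1 / (u * b1 + v * b2) := by positivity
  have hw2 : 0 ≤ v * b2 / (u * b1 + v * b2) := by positivity
  have hws : u * b1 / (u * b1 + v * b2) + v * b2 / (u * b1 + v * b2) = 1 := by
    field_simp
  have hkey := hf.2 (Set.mem_Ioi.2 (div_pos ha1 hb1)) (Set.mem_Ioi.2 (div_pos ha2 hb2))
    hw1 hw2 hws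
  simp only [smul_eq_mul] at hkey
  have harg : u * b1 / (u * b1 + v * b2) * (a1 / b1) + v * b2 / (u * b1 + v * b2) * (a2 / b2)
      = (u * a1 + v * a2) / (u * b1 + v * b2) := by
    field_simp
  rw [harg] at hkey
  have := mul_le_mul_of_nonneg_left hkey hb.le
  calc (u * b1 + v * b2) * f ((u * a1 + v * a2) / (u * b1 + v * b2))
      ≤ (u * b1 + v * b2) * (u * b1 / (u * b1 + v * b2) * f (a1 / b1)
        + v * b2 / (u * b1 + v * b2) * f (a2 / b2)) := this
    _ = u * (b1 * f (a1 / b1)) + v * (b2 * f (a2 / b2)) := by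
        field_simp

lemma gF_perspective {t : ℕ} {a b : ℝ} (ha : 0 < a) (hb : 0 < b) :
    (a-b)^2*(Real.sqrt a - Real.sqrt b)^(2*t)/((a+b)*(Real.sqrt (a*b))^t)
      = b * gF t (a / b) := by
  have hc0 : 0 < Real.sqrt a := Real.sqrt_pos.2 ha
  have hd0 : 0 < Real.sqrt b := Real.sqrt_pos.2 hb
  unfold gF
  rw [Real.sqrt_div ha.le, Real.sqrt_mul ha.le]
  have hc : Real.sqrt a ^ 2 = a := Real.sq_sqrt ha.le
  have hd : Real.sqrt b ^ 2 = b := Real.sq_sqrt hb.le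
  set c := Real.sqrt a
  set d := Real.sqrt b
  rw [← hc, ← hd]
  have h1 : c/d - 1 = (c-d)/d := by field_simp
  have hcd : (0:ℝ) < c^2 + d^2 := by positivity
  have h2 : c^2/d^2 - 1 = (c^2 - d^2)/d^2 := by field_simp
  have h3 : c^2/d^2 + 1 = (c^2 + d^2)/d^2 := by field_simp
  rw [h1, div_pow (c-d), div_pow c, pow_mul, pow_mul, h2, h3, div_pow (c^2-d^2)]
  field_simp
  ring

theorem Delta1_convex (t : ℕ) :
    (∀ x : ℝ, 0 < x → x ≠ 1 →
      0 < deriv (deriv (fun x : ℝ =>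
        (x-1)^2*(Real.sqrt x - 1)^(2*t)/((x+1)*(Real.sqrt x)^t))) x) ∧
    ConvexOn ℝ (Set.Ioi 0 ×ˢ Set.Ioi 0) (fun p : ℝ × ℝ =>
      (p.1-p.2)^2*(Real.sqrt p.1 - Real.sqrt p.2)^(2*t)/
        ((p.1+p.2)*(Real.sqrt (p.1*p.2))^t)) := by
  constructor
  · intro x hx hx1
    show 0 < deriv (deriv (gF t)) x
    rw [deriv2_gF hx]
    exact g2_pos hx hx1
  · have h := perspective_convex (gF_convex t)
    refine ⟨h.1, fun {p} hp {q} hq u v hu hv huv => ?_⟩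
    have hpq : u • p + v • q ∈ Set.Ioi (0:ℝ) ×ˢ Set.Ioi (0:ℝ) := h.1 hp hq hu hv huv
    have key : ∀ r : ℝ × ℝ, r ∈ Set.Ioi (0:ℝ) ×ˢ Set.Ioi (0:ℝ) →
        (r.1-r.2)^2*(Real.sqrt r.1 - Real.sqrt r.2)^(2*t)/
          ((r.1+r.2)*(Real.sqrt (r.1*r.2))^t) = r.2 * gF t (r.1 / r.2) := by
      rintro ⟨x, y⟩ ⟨hx, hy⟩
      exact gF_perspective hx hy
    have hbeta := h.2 hp hq hu hv huv
    simp only [smul_eq_mul] at hbeta ⊢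
    rw [← key _ hpq, ← key _ hp, ← key _ hq] at hbeta
    exact hbeta
end

section
/- For all positive reals a, b and every natural number t, the measure K²_t(a,b) = (a−b)^{2(t+1)}/(√(ab))^{2t+1} is jointly convex in (a,b) on (0,∞)². Equivalently, the function f(x) = (x−1)^{2(t+1)}/(√x)^{2t+1} is convex on (0,∞) with f(1)=0, and its second derivative is f''(x) = (x−1)^{2t}(2t+1)[2tx²+3x²+2(2t+1)x+2t+3]/(4x²(√x)^{2t+1}) ≥ 0. -/
open Real Set
namespace K2aux


noncomputable def c (t : ℕ) : ℝ := -(((2*t+1 : ℕ) : ℝ)/2)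
noncomputable def f (t : ℕ) (x : ℝ) : ℝ := (x-1)^(2*(t+1))/(Real.sqrt x)^(2*t+1)
noncomputable def g (t : ℕ) (x : ℝ) : ℝ := (x-1)^(2*(t+1)) * x ^ (c t)

lemma sqrt_pow_eq (t : ℕ) {x : ℝ} (hx : 0 < x) :
    (Real.sqrt x)^(2*t+1) = x ^ (((2*t+1 : ℕ):ℝ)/2) := by
  rw [Real.sqrt_eq_rpow, ← Real.rpow_natCast (x ^ (1/(2:ℝ))) (2*t+1), ← Real.rpow_mul hx.le]
  ring_nf

lemma f_eq_g (t : ℕ) {x : ℝ} (hx : 0 < x) : f t x = g t x := by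
  rw [f, g, sqrt_pow_eq t hx, c, Real.rpow_neg hx.le, div_eq_mul_inv]

noncomputable def g1 (t : ℕ) (x : ℝ) : ℝ :=
  (2*(t+1) : ℕ) * (x-1)^(2*t+1) * x ^ (c t) + (x-1)^(2*(t+1)) * (c t * x ^ (c t - 1))

lemma hasDerivAt_g (t : ℕ) {x : ℝ} (hx : 0 < x) : HasDerivAt (g t) (g1 t x) x := by
  have h1 : HasDerivAt (fun x : ℝ => (x-1)^(2*(t+1)))
      ((2*(t+1) : ℕ) * (x-1)^(2*(t+1)-1) * 1) x :=
    ((hasDerivAt_id x).sub_const 1).pow _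
  have h2 : HasDerivAt (fun x : ℝ => x ^ (c t)) (c t * x ^ (c t - 1)) x :=
    Real.hasDerivAt_rpow_const (Or.inl hx.ne')
  have := h1.mul h2
  refine this.congr_deriv ?_
  rw [g1]
  have : 2*(t+1)-1 = 2*t+1 := by omega
  rw [this]; ring

noncomputable def g2 (t : ℕ) (x : ℝ) : ℝ :=
  ((2*(t+1) : ℕ) * ((2*t+1 : ℕ) * (x-1)^(2*t) * x ^ (c t))
    + (2*(t+1) : ℕ) * (x-1)^(2*t+1) * (c t * x ^ (c t - 1)))
  + ((2*(t+1) : ℕ) * (x-1)^(2*t+1) * (c t * x ^ (c t - 1))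
    + (x-1)^(2*(t+1)) * (c t * ((c t - 1) * x ^ (c t - 1 - 1))))

lemma hasDerivAt_g1 (t : ℕ) {x : ℝ} (hx : 0 < x) : HasDerivAt (g1 t) (g2 t x) x := by
  have hpow : ∀ n : ℕ, HasDerivAt (fun x : ℝ => (x-1)^n) ((n : ℝ) * (x-1)^(n-1) * 1) x :=
    fun n => ((hasDerivAt_id x).sub_const 1).pow n
  have h2 : HasDerivAt (fun x : ℝ => x ^ (c t)) (c t * x ^ (c t - 1)) x :=
    Real.hasDerivAt_rpow_const (Or.inl hx.ne')
  have h3 : HasDerivAt (fun x : ℝ => x ^ (c t - 1)) ((c t - 1) * x ^ (c t - 1 - 1)) x :=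
    Real.hasDerivAt_rpow_const (Or.inl hx.ne')
  have hA : HasDerivAt (fun x : ℝ => (2*(t+1) : ℕ) * (x-1)^(2*t+1) * x ^ (c t))
      ((2*(t+1) : ℕ) * ((2*t+1 : ℕ) * (x-1)^(2*t) * x ^ (c t))
        + (2*(t+1) : ℕ) * (x-1)^(2*t+1) * (c t * x ^ (c t - 1))) x := by
    have := (((hpow (2*t+1)).const_mul ((2*(t+1):ℕ):ℝ)).mul h2)
    refine this.congr_deriv ?_
    have : 2*t+1-1 = 2*t := by omega
    rw [this]; push_cast; ring
  have hB : HasDerivAt (fun x : ℝ => (x-1)^(2*(t+1)) * (c t * x ^ (c t - 1)))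
      ((2*(t+1) : ℕ) * (x-1)^(2*t+1) * (c t * x ^ (c t - 1))
        + (x-1)^(2*(t+1)) * (c t * ((c t - 1) * x ^ (c t - 1 - 1)))) x := by
    have := (hpow (2*(t+1))).mul (h3.const_mul (c t))
    refine this.congr_deriv ?_
    have : 2*(t+1)-1 = 2*t+1 := by omega
    rw [this]; push_cast; ring
  exact (hA.add hB)

lemma deriv_f_eq (t : ℕ) {x : ℝ} (hx : 0 < x) : deriv (f t) x = g1 t x := by
  have hev : f t =ᶠ[nhds x] g t :=
    Filter.eventuallyEq_of_mem (Ioi_mem_nhds hx) (fun y hy => f_eq_g t hy)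
  rw [hev.deriv_eq, (hasDerivAt_g t hx).deriv]

lemma deriv2_f_eq (t : ℕ) {x : ℝ} (hx : 0 < x) : deriv (deriv (f t)) x = g2 t x := by
  have hev : deriv (f t) =ᶠ[nhds x] g1 t :=
    Filter.eventuallyEq_of_mem (Ioi_mem_nhds hx) (fun y hy => deriv_f_eq t hy)
  rw [hev.deriv_eq, (hasDerivAt_g1 t hx).deriv]



lemma g2_eq (t : ℕ) {x : ℝ} (hx : 0 < x) :
    g2 t x = (x-1)^(2*t)*(2*(t:ℝ)+1)*(2*(t:ℝ)*x^2+3*x^2+2*(2*(t:ℝ)+1)*x+2*(t:ℝ)+3)/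
          (4*x^2*(Real.sqrt x)^(2*t+1)) := by
  have hA : (0:ℝ) < x ^ (c t) := Real.rpow_pos_of_pos hx _
  have h1 : x ^ (c t - 1) = x ^ (c t) / x := by
    rw [Real.rpow_sub hx, Real.rpow_one]
  have h2 : x ^ (c t - 1 - 1) = x ^ (c t) / x / x := by
    rw [Real.rpow_sub hx, Real.rpow_sub hx, Real.rpow_one]
  have h3 : (Real.sqrt x)^(2*t+1) = (x ^ (c t))⁻¹ := by
    rw [sqrt_pow_eq t hx, c, Real.rpow_neg hx.le, inv_inv]
  rw [g2, h1, h2, h3, c]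
  have hpow : (x-1)^(2*(t+1)) = (x-1)^(2*t) * (x-1)^2 := by ring
  have hpow2 : (x-1)^(2*t+1) = (x-1)^(2*t) * (x-1) := by ring
  rw [hpow, hpow2]
  field_simp
  push_cast
  ring

end K2aux

namespace K2aux

lemma g2_nonneg (t : ℕ) {x : ℝ} (hx : 0 < x) : 0 ≤ g2 t x := by
  rw [g2_eq t hx]
  have h1 : (0:ℝ) ≤ (x-1)^(2*t) := by
    rw [pow_mul]; positivity
  have hs : 0 < Real.sqrt x := Real.sqrt_pos.mpr hx
  have h2 : (0:ℝ) < 2*(t:ℝ)*x^2+3*x^2+2*(2*(t:ℝ)+1)*x+2*(t:ℝ)+3 := by positivity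
  have h3 : (0:ℝ) < 4*x^2*(Real.sqrt x)^(2*t+1) := by positivity
  apply div_nonneg _ h3.le
  have : (0:ℝ) ≤ 2*(t:ℝ)+1 := by positivity
  nlinarith [mul_nonneg (mul_nonneg h1 this) h2.le]

lemma hasDerivAt_f (t : ℕ) {x : ℝ} (hx : 0 < x) : HasDerivAt (f t) (g1 t x) x := by
  have hev : g t =ᶠ[nhds x] f t :=
    Filter.eventuallyEq_of_mem (Ioi_mem_nhds hx) (fun y hy => (f_eq_g t hy).symm)
  exact (hasDerivAt_g t hx).congr_of_eventuallyEq hev.symm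

lemma hasDerivAt_deriv_f (t : ℕ) {x : ℝ} (hx : 0 < x) :
    HasDerivAt (deriv (f t)) (g2 t x) x := by
  have hev : g1 t =ᶠ[nhds x] deriv (f t) :=
    Filter.eventuallyEq_of_mem (Ioi_mem_nhds hx) (fun y hy => (deriv_f_eq t hy).symm)
  exact (hasDerivAt_g1 t hx).congr_of_eventuallyEq hev.symm

lemma convexOn_f (t : ℕ) : ConvexOn ℝ (Ioi 0) (f t) := by
  refine convexOn_of_deriv2_nonneg (convex_Ioi 0) ?_ ?_ ?_ ?_
  · exact fun x hx => ((hasDerivAt_f t hx).continuousAt).continuousWithinAt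
  · rw [interior_Ioi]
    exact fun x hx => ((hasDerivAt_f t hx).differentiableAt).differentiableWithinAt
  · rw [interior_Ioi]
    exact fun x hx => ((hasDerivAt_deriv_f t hx).differentiableAt).differentiableWithinAt
  · rw [interior_Ioi]
    intro x hx
    have : deriv^[2] (f t) x = deriv (deriv (f t)) x := by
      simp [Function.iterate_succ, Function.iterate_one]
    rw [this, deriv2_f_eq t hx]
    exact g2_nonneg t hx

lemma perspective (t : ℕ) {a b : ℝ} (ha : 0 < a) (hb : 0 < b) :
    (a-b)^(2*(t+1))/(Real.sqrt (a*b))^(2*t+1) = b * f t (a/b) := by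
  have hab : 0 < a/b := div_pos ha hb
  have habm : 0 < a*b := mul_pos ha hb
  rw [f, sqrt_pow_eq t hab, sqrt_pow_eq t habm]
  set s : ℝ := ((2*t+1 : ℕ):ℝ)/2 with hs
  have hdiv : (a/b) ^ s = a ^ s / b ^ s := Real.div_rpow ha.le hb.le s
  have hmul : (a*b) ^ s = a ^ s * b ^ s := Real.mul_rpow ha.le hb.le
  have hnum : (a/b - 1)^(2*(t+1)) = (a-b)^(2*(t+1)) / b^(2*(t+1)) := by
    rw [div_sub_one hb.ne', div_pow]
  rw [hdiv, hmul, hnum]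
  have hbpow : (b:ℝ)^(2*(t+1)) = b * (b ^ s * b ^ s) := by
    have hc : ((2*(t+1):ℕ):ℝ) = 1 + (s + s) := by rw [hs]; push_cast; ring
    rw [← Real.rpow_natCast b (2*(t+1)), hc, Real.rpow_add hb, Real.rpow_add hb, Real.rpow_one]
  have has : (0:ℝ) < a ^ s := Real.rpow_pos_of_pos ha _
  have hbs : (0:ℝ) < b ^ s := Real.rpow_pos_of_pos hb _
  rw [hbpow]
  field_simp

lemma convexOn_prod (t : ℕ) :
    ConvexOn ℝ (Ioi (0:ℝ) ×ˢ Ioi (0:ℝ)) (fun p : ℝ × ℝ =>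
      (p.1-p.2)^(2*(t+1))/(Real.sqrt (p.1*p.2))^(2*t+1)) := by
  constructor
  · exact (convex_Ioi (0:ℝ)).prod (convex_Ioi 0)
  · rintro ⟨a1, b1⟩ hp ⟨a2, b2⟩ hq u v hu hv huv
    obtain ⟨ha1, hb1⟩ := hp
    obtain ⟨ha2, hb2⟩ := hq
    simp only [Set.mem_Ioi] at ha1 hb1 ha2 hb2
    have hcomb : ∀ x y : ℝ, 0 < x → 0 < y → 0 < u*x + v*y := by
      intro x y hx hy
      rcases eq_or_lt_of_le hu with h|h
      · have hv' : 0 < v := by nlinarith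
        nlinarith
      · nlinarith
    have hB : 0 < u*b1 + v*b2 := hcomb _ _ hb1 hb2
    simp only [Prod.smul_mk, Prod.mk_add_mk, smul_eq_mul]
    rw [perspective t ha1 hb1, perspective t ha2 hb2,
      perspective t (hcomb _ _ ha1 ha2) hB]
    set B := u*b1 + v*b2 with hBdef
    have key := (convexOn_f t).2 (Set.mem_Ioi.mpr (div_pos ha1 hb1))
      (Set.mem_Ioi.mpr (div_pos ha2 hb2))
      (show (0:ℝ) ≤ u*b1/B by positivity) (show (0:ℝ) ≤ v*b2/B by positivity)
      (by field_simp; exact hBdef.symm)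
    simp only [smul_eq_mul] at key
    have harg : u*b1/B * (a1/b1) + v*b2/B * (a2/b2) = (u*a1 + v*a2)/B := by
      field_simp
    rw [harg] at key
    calc B * f t ((u*a1+v*a2)/B)
        ≤ B * (u*b1/B * f t (a1/b1) + v*b2/B * f t (a2/b2)) := by
          exact mul_le_mul_of_nonneg_left key hB.le
      _ = u * (b1 * f t (a1/b1)) + v * (b2 * f t (a2/b2)) := by
          field_simp

end K2aux

theorem K2_convex (t : ℕ) :
    ConvexOn ℝ (Set.Ioi 0 ×ˢ Set.Ioi 0) (fun p : ℝ × ℝ =>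
      (p.1-p.2)^(2*(t+1))/(Real.sqrt (p.1*p.2))^(2*t+1)) ∧
    ConvexOn ℝ (Set.Ioi 0) (fun x : ℝ => (x-1)^(2*(t+1))/(Real.sqrt x)^(2*t+1)) ∧
    (fun x : ℝ => (x-1)^(2*(t+1))/(Real.sqrt x)^(2*t+1)) 1 = 0 ∧
    (∀ x : ℝ, 0 < x →
      deriv (deriv (fun x : ℝ => (x-1)^(2*(t+1))/(Real.sqrt x)^(2*t+1))) x =
        (x-1)^(2*t)*(2*(t:ℝ)+1)*(2*(t:ℝ)*x^2+3*x^2+2*(2*(t:ℝ)+1)*x+2*(t:ℝ)+3)/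
          (4*x^2*(Real.sqrt x)^(2*t+1))) := by
  refine ⟨K2aux.convexOn_prod t, K2aux.convexOn_f t, by simp, fun x hx => ?_⟩
  rw [show (fun x : ℝ => (x-1)^(2*(t+1))/(Real.sqrt x)^(2*t+1)) = K2aux.f t from rfl,
    K2aux.deriv2_f_eq t hx, K2aux.g2_eq t hx]
end

section
/- Let f : (0,∞) → ℝ be convex and differentiable with f(1) = 0. Then the function φ_f(a,b) = a·f(b/a) is jointly convex on (0,∞)². Moreover, if additionally f'(1) = 0, then 0 ≤ φ_f(a,b) ≤ ((b−a)/a)·φ_{f'}(a,b) for all a, b > 0. -/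
lemma support_line (f : ℝ → ℝ)
    (hconv : ConvexOn ℝ (Set.Ioi 0) f)
    (hdiff : DifferentiableOn ℝ f (Set.Ioi 0))
    {x y : ℝ} (hx : x ∈ Set.Ioi 0) (hy : y ∈ Set.Ioi 0) :
    f x + deriv f x * (y - x) ≤ f y := by
  have hdx : DifferentiableAt ℝ f x :=
    (hdiff x hx).differentiableAt (isOpen_Ioi.mem_nhds hx)
  rcases lt_trichotomy x y with h | h | h
  · have := hconv.deriv_le_slope hx hy h hdx
    rw [slope_def_field, le_div_iff₀ (by linarith)] at this
    nlinarith
  · simp [h]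
  · have := hconv.slope_le_deriv hy hx h hdx
    simp [slope_def_field] at this
    rw [div_le_iff₀ (by linarith)] at this
    nlinarith

theorem csiszar_convexity (f : ℝ → ℝ)
    (hconv : ConvexOn ℝ (Set.Ioi 0) f)
    (hdiff : DifferentiableOn ℝ f (Set.Ioi 0))
    (hf1 : f 1 = 0) :
    ConvexOn ℝ (Set.Ioi 0 ×ˢ Set.Ioi 0) (fun p : ℝ × ℝ => p.1 * f (p.2 / p.1)) ∧
    (deriv f 1 = 0 → ∀ a b : ℝ, 0 < a → 0 < b →
      0 ≤ a * f (b / a) ∧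
      a * f (b / a) ≤ ((b - a) / a) * (a * deriv f (b / a))) := by
  constructor
  · refine ⟨(convex_Ioi (0:ℝ)).prod (convex_Ioi 0), ?_⟩
    rintro ⟨a, b⟩ ⟨ha, hb⟩ ⟨c, d⟩ ⟨hc, hd⟩ u v hu hv huv
    simp only [Set.mem_Ioi] at ha hb hc hd
    simp only [Prod.smul_fst, Prod.smul_snd, Prod.fst_add, Prod.snd_add, smul_eq_mul]
    have hD : 0 < u * a + v * c := by
      rcases eq_or_lt_of_le hu with h | h
      · have : v = 1 := by linarith
        positivity
      · positivity
    set w1 := u * a / (u * a + v * c) with hw1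
    set w2 := v * c / (u * a + v * c) with hw2
    have hw1n : 0 ≤ w1 := by positivity
    have hw2n : 0 ≤ w2 := by positivity
    have hws : w1 + w2 = 1 := by
      rw [hw1, hw2]; field_simp
    have key := hconv.2 (Set.mem_Ioi.mpr (div_pos hb ha))
      (Set.mem_Ioi.mpr (div_pos hd hc)) hw1n hw2n hws
    simp only [smul_eq_mul] at key
    have harg : w1 * (b / a) + w2 * (d / c) = (u * b + v * d) / (u * a + v * c) := by
      rw [hw1, hw2]; field_simp
    rw [harg] at key
    have := mul_le_mul_of_nonneg_left key hD.le
    calc (u * a + v * c) * f ((u * b + v * d) / (u * a + v * c))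
        ≤ (u * a + v * c) * (w1 * f (b / a) + w2 * f (d / c)) := this
      _ = u * (a * f (b / a)) + v * (c * f (d / c)) := by
          rw [hw1, hw2]; field_simp
  · intro hd1 a b ha hb
    have hx : b / a ∈ Set.Ioi (0:ℝ) := Set.mem_Ioi.mpr (div_pos hb ha)
    have h1 : (1:ℝ) ∈ Set.Ioi (0:ℝ) := by norm_num
    have hlow := support_line f hconv hdiff h1 hx
    rw [hf1, hd1] at hlow
    have hup := support_line f hconv hdiff hx h1
    rw [hf1] at hup
    constructor
    · have : 0 ≤ f (b / a) := by linarith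
      positivity
    · have : f (b / a) ≤ deriv f (b / a) * (b / a - 1) := by linarith
      have h2 := mul_le_mul_of_nonneg_left this ha.le
      calc a * f (b / a) ≤ a * (deriv f (b / a) * (b / a - 1)) := h2
        _ = ((b - a) / a) * (a * deriv f (b / a)) := by field_simp
end

section
/- Let f₁, f₂ : (0,∞) → ℝ be twice differentiable with f₁(1)=f₁'(1)=0, f₂(1)=f₂'(1)=0, f₂''(x) > 0 for all x > 0, and suppose there are constants 0 ≤ α < β with α ≤ f₁''(x)/f₂''(x) ≤ β for all x > 0. Then α·φ_{f₂}(a,b) ≤ φ_{f₁}(a,b) ≤ β·φ_{f₂}(a,b) for all a, b > 0, where φ_f(a,b) = a·f(b/a). -/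
/-!
A function with nonnegative second derivative on an interval is convex there, so a critical
point is a global minimum on it. Applied to `f₁ - α f₂` and `β f₂ - f₁`, which vanish together
with their first derivatives at `1` and have nonnegative second derivatives by the ratio bounds,
this gives `α f₂ ≤ f₁ ≤ β f₂` on `(0, ∞)`; the perspective `a f (b / a)` preserves both
inequalities since `a > 0`.
-/

open Set

section SecondDerivative

variable {D : Set ℝ} {x₀ : ℝ}

theorem isMinOn_of_hasDerivAt2_nonneg (hDo : IsOpen D) (hD : Convex ℝ D) (hx₀ : x₀ ∈ D)
    {h h' h'' : ℝ → ℝ} (hh : ∀ x ∈ D, HasDerivAt h (h' x) x)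
    (hh' : ∀ x ∈ D, HasDerivAt h' (h'' x) x) (hh''_nonneg : ∀ x ∈ D, 0 ≤ h'' x)
    (hcrit : h' x₀ = 0) : IsMinOn h D x₀ := by
  have hconv : ConvexOn ℝ D h := by
    refine convexOn_of_hasDerivWithinAt2_nonneg (f' := h') (f'' := h'') hD
      (fun x hx ↦ (hh x hx).continuousAt.continuousWithinAt) ?_ ?_ ?_ <;> rw [hDo.interior_eq]
    · exact fun x hx ↦ (hh x hx).hasDerivWithinAt
    · exact fun x hx ↦ (hh' x hx).hasDerivWithinAt
    · exact hh''_nonneg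
  refine hconv.isMinOn_of_rightDeriv_eq_zero (by rwa [hDo.interior_eq]) ?_
  rw [(hh x₀ hx₀).hasDerivWithinAt.derivWithin (uniqueDiffWithinAt_Ioi x₀), hcrit]

theorem le_of_hasDerivAt2_le (hDo : IsOpen D) (hD : Convex ℝ D) (hx₀ : x₀ ∈ D)
    {f f' f'' g g' g'' : ℝ → ℝ}
    (hf : ∀ x ∈ D, HasDerivAt f (f' x) x) (hf' : ∀ x ∈ D, HasDerivAt f' (f'' x) x)
    (hg : ∀ x ∈ D, HasDerivAt g (g' x) x) (hg' : ∀ x ∈ D, HasDerivAt g' (g'' x) x)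
    (heq : f x₀ = g x₀) (heq' : f' x₀ = g' x₀) (hle : ∀ x ∈ D, f'' x ≤ g'' x) :
    ∀ x ∈ D, f x ≤ g x := by
  have hmin : IsMinOn (fun x ↦ g x - f x) D x₀ :=
    isMinOn_of_hasDerivAt2_nonneg hDo hD hx₀ (fun x hx ↦ (hg x hx).sub (hf x hx))
      (fun x hx ↦ (hg' x hx).sub (hf' x hx)) (fun x hx ↦ sub_nonneg.2 (hle x hx))
      (sub_eq_zero.2 heq'.symm)
  intro x hx
  linarith [isMinOn_iff.1 hmin x hx]

end SecondDerivative

theorem comparison_lemma_general (f₁ f₂ : ℝ → ℝ) (α β : ℝ)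
    (h1d : DifferentiableOn ℝ f₁ (Set.Ioi 0))
    (h1d2 : DifferentiableOn ℝ (deriv f₁) (Set.Ioi 0))
    (h2d : DifferentiableOn ℝ f₂ (Set.Ioi 0))
    (h2d2 : DifferentiableOn ℝ (deriv f₂) (Set.Ioi 0))
    (h11 : f₁ 1 = 0) (h11' : deriv f₁ 1 = 0)
    (h21 : f₂ 1 = 0) (h21' : deriv f₂ 1 = 0)
    (h2pos : ∀ x : ℝ, 0 < x → 0 < deriv (deriv f₂) x)
    (hratio : ∀ x : ℝ, 0 < x →
      α ≤ deriv (deriv f₁) x / deriv (deriv f₂) x ∧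
      deriv (deriv f₁) x / deriv (deriv f₂) x ≤ β) :
    ∀ a b : ℝ, 0 < a → 0 < b →
      α * (a * f₂ (b / a)) ≤ a * f₁ (b / a) ∧
      a * f₁ (b / a) ≤ β * (a * f₂ (b / a)) := by
  have hasDerivAt_deriv {φ : ℝ → ℝ} (hφ : DifferentiableOn ℝ φ (Ioi 0)) :
      ∀ x ∈ Ioi (0 : ℝ), HasDerivAt φ (deriv φ x) x := fun x hx ↦
    ((hφ x hx).differentiableAt (Ioi_mem_nhds hx)).hasDerivAt
  have compare := @le_of_hasDerivAt2_le (Ioi 0) 1 isOpen_Ioi (convex_Ioi 0) (mem_Ioi.2 one_pos)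
  have hlow : ∀ x ∈ Ioi (0 : ℝ), α * f₂ x ≤ f₁ x :=
    compare (fun x hx ↦ (hasDerivAt_deriv h2d x hx).const_mul α)
      (fun x hx ↦ (hasDerivAt_deriv h2d2 x hx).const_mul α)
      (hasDerivAt_deriv h1d) (hasDerivAt_deriv h1d2) (by simp [h11, h21]) (by simp [h11', h21'])
      fun x hx ↦ (le_div_iff₀ (h2pos x hx)).1 (hratio x hx).1
  have hupp : ∀ x ∈ Ioi (0 : ℝ), f₁ x ≤ β * f₂ x :=
    compare (hasDerivAt_deriv h1d) (hasDerivAt_deriv h1d2)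
      (fun x hx ↦ (hasDerivAt_deriv h2d x hx).const_mul β)
      (fun x hx ↦ (hasDerivAt_deriv h2d2 x hx).const_mul β) (by simp [h11, h21])
      (by simp [h11', h21']) fun x hx ↦ (div_le_iff₀ (h2pos x hx)).1 (hratio x hx).2
  intro a b ha hb
  have hba : b / a ∈ Ioi (0 : ℝ) := div_pos hb ha
  rw [mul_left_comm α, mul_left_comm β]
  exact ⟨mul_le_mul_of_nonneg_left (hlow _ hba) ha.le,
    mul_le_mul_of_nonneg_left (hupp _ hba) ha.le⟩

theorem comparison_lemma (f₁ f₂ : ℝ → ℝ) (α β : ℝ)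
    (h1d : DifferentiableOn ℝ f₁ (Set.Ioi 0))
    (h1d2 : DifferentiableOn ℝ (deriv f₁) (Set.Ioi 0))
    (h2d : DifferentiableOn ℝ f₂ (Set.Ioi 0))
    (h2d2 : DifferentiableOn ℝ (deriv f₂) (Set.Ioi 0))
    (h11 : f₁ 1 = 0) (h11' : deriv f₁ 1 = 0)
    (h21 : f₂ 1 = 0) (h21' : deriv f₂ 1 = 0)
    (h2pos : ∀ x : ℝ, 0 < x → 0 < deriv (deriv f₂) x)
    (hα : 0 ≤ α) (hαβ : α < β)
    (hratio : ∀ x : ℝ, 0 < x →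
      α ≤ deriv (deriv f₁) x / deriv (deriv f₂) x ∧
      deriv (deriv f₁) x / deriv (deriv f₂) x ≤ β) :
    ∀ a b : ℝ, 0 < a → 0 < b →
      α * (a * f₂ (b / a)) ≤ a * f₁ (b / a) ∧
      a * f₁ (b / a) ≤ β * (a * f₂ (b / a)) :=
  comparison_lemma_general f₁ f₂ α β h1d h1d2 h2d h2d2 h11 h11' h21 h21' h2pos hratio
end
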